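/- Let $T>0$, $R>0$, $\gamma,\eta\in\mathbb{R}$, let $b,c:[0,T]\to\mathbb{R}$ be bounded measurable, and define $M(t,s)=\int_0^{s\wedge t}|c(r)|^2 e^{\int_r^t b(v)dv + \int_r^s b(v)dv}\,dr$. If $\sup_{t\in[0,T]}\int_0^T |(\gamma-1)M(t,s)|^2\,ds < R$ and $T\sup_{t\in[0,T]}\int_0^T |(\gamma-1)M(t,s)|^2 ds< R^2$, then the NCE equation $\hat a(t) = x_0 e^{\int_0^t b(r)dr} + \frac{1}{R}\int_0^T M(t,s)\big[(\gamma-1)\hat a(s)+\eta\big]ds$ admits a continuous solution $\hat a\in C([0,T];\mathbb{R})$. -/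
import Mathlib


open MeasureTheory intervalIntegral Real

/-- A measurable, uniformly bounded function is interval integrable. -/
lemma stmt15_aux_intInt (f : ℝ → ℝ) (hf : Measurable f) (Mf : ℝ)
    (hb : ∀ t, |f t| ≤ Mf) (u v : ℝ) : IntervalIntegrable f volume u v := by
  have h : ∀ (p q : ℝ), IntegrableOn f (Set.Ioc p q) volume :=
    fun p q => (integrable_const Mf).mono' hf.aestronglyMeasurable.restrict
      (ae_of_all _ fun x => by simpa [Real.norm_eq_abs] using hb x)
  exact ⟨h _ _, h _ _⟩

/-- elementary AM-GM type bound: `|x| ≤ x² T/(2R) + R/(2T)` for `T, R > 0`. -/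
lemma stmt15_aux_amgm (T R x : ℝ) (hT : 0 < T) (hR : 0 < R) :
    |x| ≤ x ^ 2 * (T / (2 * R)) + R / (2 * T) := by
  have h2 : x ^ 2 * (T / (2 * R)) + R / (2 * T) = (x ^ 2 * T ^ 2 + R ^ 2) / (2 * R * T) := by
    field_simp
  rw [h2, le_div_iff₀ (by positivity)]
  nlinarith [sq_nonneg (|x| * T - R), sq_abs x]

/-- existence of a continuous solution of the NCE equation in
the SDE special case, with kernel
`M(t,s) = ∫₀^{s∧t} |c(r)|² exp(∫ᵣᵗ b + ∫ᵣˢ b) dr`. -/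
theorem stmt15 (T R γ η x₀ : ℝ) (hT : 0 < T) (hR : 0 < R)
    (b c : ℝ → ℝ) (hbm : Measurable b) (hcm : Measurable c)
    (Mb Mc : ℝ) (hbb : ∀ t, |b t| ≤ Mb) (hcb : ∀ t, |c t| ≤ Mc)
    (Mk : ℝ → ℝ → ℝ)
    (hMk : ∀ t s, Mk t s = ∫ r in (0 : ℝ)..(min s t),
      (c r) ^ 2 * Real.exp ((∫ v in r..t, b v) + (∫ v in r..s, b v)))
    (κ : ℝ)
    (hκ : ∀ t ∈ Set.Icc (0 : ℝ) T, ∫ s in (0 : ℝ)..T, ((γ - 1) * Mk t s) ^ 2 ≤ κ)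
    (hκR : κ < R) (hκR2 : T * κ < R ^ 2) :
    ∃ a : ℝ → ℝ, ContinuousOn a (Set.Icc 0 T) ∧
      ∀ t ∈ Set.Icc (0 : ℝ) T,
        a t = x₀ * Real.exp (∫ r in (0 : ℝ)..t, b r)
          + R⁻¹ * ∫ s in (0 : ℝ)..T, Mk t s * ((γ - 1) * a s + η) := by
  -- the primitive of b
  set B : ℝ → ℝ := fun t => ∫ r in (0 : ℝ)..t, b r with hBdef
  have hbint : ∀ u v : ℝ, IntervalIntegrable b volume u v :=
    stmt15_aux_intInt b hbm Mb hbb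
  have hBcont : Continuous B := intervalIntegral.continuous_primitive hbint 0
  -- the primitive P
  have hMc2 : ∀ r, |c r ^ 2| ≤ Mc ^ 2 := by
    intro r
    rw [abs_pow]
    exact pow_le_pow_left₀ (abs_nonneg _) (hcb r) 2
  have hPintegrand : ∀ u v : ℝ,
      IntervalIntegrable (fun r => c r ^ 2 * Real.exp (-(2 * B r))) volume u v := by
    intro u v
    exact (stmt15_aux_intInt (fun r => c r ^ 2) (hcm.pow_const 2) (Mc ^ 2) hMc2 u v).mul_continuousOn
      ((Real.continuous_exp.comp (continuous_const.mul hBcont).neg).continuousOn)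
  set P : ℝ → ℝ := fun u => ∫ r in (0 : ℝ)..u, c r ^ 2 * Real.exp (-(2 * B r)) with hPdef
  have hPcont : Continuous P := intervalIntegral.continuous_primitive hPintegrand 0
  -- key factorization of the kernel
  have hsub : ∀ r w : ℝ, (∫ v in r..w, b v) = B w - B r := by
    intro r w
    have h := intervalIntegral.integral_add_adjacent_intervals (hbint 0 r) (hbint r w)
    simp only [hBdef]
    linarith
  have hKeq : ∀ t s, Mk t s = Real.exp (B t + B s) * P (min s t) := by
    intro t s
    rw [hMk]
    have : (∫ r in (0 : ℝ)..(min s t),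
        (c r) ^ 2 * Real.exp ((∫ v in r..t, b v) + (∫ v in r..s, b v)))
        = ∫ r in (0 : ℝ)..(min s t),
          Real.exp (B t + B s) * (c r ^ 2 * Real.exp (-(2 * B r))) := by
      refine intervalIntegral.integral_congr fun r _ => ?_
      rw [hsub r t, hsub r s,
        show (B t - B r) + (B s - B r) = (B t + B s) + (-(2 * B r)) by ring,
        Real.exp_add]
      ring
    rw [this, intervalIntegral.integral_const_mul]
  have hKcont : Continuous (fun p : ℝ × ℝ => Mk p.1 p.2) := by
    have heq : (fun p : ℝ × ℝ => Mk p.1 p.2)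
        = fun p : ℝ × ℝ => Real.exp (B p.1 + B p.2) * P (min p.2 p.1) :=
      funext fun p => hKeq p.1 p.2
    rw [heq]
    exact (Real.continuous_exp.comp ((hBcont.comp continuous_fst).add
      (hBcont.comp continuous_snd))).mul (hPcont.comp (continuous_snd.min continuous_fst))
  -- the Banach space of continuous functions on [0, T]
  have hT' : (0 : ℝ) ≤ T := hT.le
  set X := C(Set.Icc (0 : ℝ) T, ℝ) with hXdef
  -- the fixed point map
  have hcontbody : ∀ a : X, Continuous (fun t : Set.Icc (0 : ℝ) T =>
      x₀ * Real.exp (B ↑t) + R⁻¹ *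
        ∫ s in (0 : ℝ)..T, Mk (↑t) s * ((γ - 1) * a (Set.projIcc 0 T hT' s) + η)) := by
    intro a
    refine (continuous_const.mul (Real.continuous_exp.comp
      (hBcont.comp continuous_subtype_val))).add (continuous_const.mul ?_)
    refine intervalIntegral.continuous_parametric_intervalIntegral_of_continuous'
      (f := fun (t : Set.Icc (0 : ℝ) T) (s : ℝ) =>
        Mk (↑t) s * ((γ - 1) * a (Set.projIcc 0 T hT' s) + η)) ?_ 0 T
    exact (hKcont.comp ((continuous_subtype_val.comp continuous_fst).prodMk
      continuous_snd)).mul ((continuous_const.mul (a.continuous.comp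
      (continuous_projIcc.comp continuous_snd))).add continuous_const)
  set Φ : X → X := fun a =>
    ⟨fun t => x₀ * Real.exp (B ↑t) + R⁻¹ *
        ∫ s in (0 : ℝ)..T, Mk (↑t) s * ((γ - 1) * a (Set.projIcc 0 T hT' s) + η),
      hcontbody a⟩ with hΦdef
  -- nonnegativity of κ
  have hκ0 : 0 ≤ κ :=
    le_trans (intervalIntegral.integral_nonneg hT' fun s _ => sq_nonneg _)
      (hκ 0 ⟨le_refl 0, hT'⟩)
  -- the Lipschitz constant
  set L : ℝ := T * κ / (2 * R ^ 2) + 1 / 2 with hLdef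
  have hL0 : 0 ≤ L := by positivity
  have hL1 : L < 1 := by
    rw [hLdef]
    have h1 : T * κ / (2 * R ^ 2) < 1 / 2 := by
      rw [div_lt_div_iff₀ (by positivity) (by norm_num)]
      nlinarith
    linarith
  -- the Lipschitz estimate
  have hLip : ∀ a a' : X, dist (Φ a) (Φ a') ≤ L * dist a a' := by
    intro a a'
    rw [ContinuousMap.dist_le (mul_nonneg hL0 dist_nonneg)]
    intro t
    have ht : (t : ℝ) ∈ Set.Icc (0 : ℝ) T := t.2
    set D := dist a a' with hDdef
    have hD0 : (0 : ℝ) ≤ D := dist_nonneg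
    have hΔ : ∀ s : ℝ, |a (Set.projIcc 0 T hT' s) - a' (Set.projIcc 0 T hT' s)| ≤ D := by
      intro s
      have := ContinuousMap.dist_apply_le_dist (f := a) (g := a') (Set.projIcc 0 T hT' s)
      rwa [Real.dist_eq] at this
    -- continuity in s of everything involved
    have hKscont : Continuous fun s : ℝ => Mk (↑t) s :=
      hKcont.comp (continuous_const.prodMk continuous_id)
    have hacont : Continuous fun s : ℝ => a (Set.projIcc 0 T hT' s) :=
      a.continuous.comp continuous_projIcc
    have ha'cont : Continuous fun s : ℝ => a' (Set.projIcc 0 T hT' s) :=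
      a'.continuous.comp continuous_projIcc
    have hint1 : IntervalIntegrable
        (fun s => Mk (↑t) s * ((γ - 1) * a (Set.projIcc 0 T hT' s) + η)) volume 0 T :=
      (hKscont.mul ((continuous_const.mul hacont).add continuous_const)).intervalIntegrable 0 T
    have hint2 : IntervalIntegrable
        (fun s => Mk (↑t) s * ((γ - 1) * a' (Set.projIcc 0 T hT' s) + η)) volume 0 T :=
      (hKscont.mul ((continuous_const.mul ha'cont).add continuous_const)).intervalIntegrable 0 T
    have hdiff : (∫ s in (0 : ℝ)..T, Mk (↑t) s * ((γ - 1) * a (Set.projIcc 0 T hT' s) + η))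
        - (∫ s in (0 : ℝ)..T, Mk (↑t) s * ((γ - 1) * a' (Set.projIcc 0 T hT' s) + η))
        = ∫ s in (0 : ℝ)..T, ((γ - 1) * Mk (↑t) s) *
            (a (Set.projIcc 0 T hT' s) - a' (Set.projIcc 0 T hT' s)) := by
      rw [← intervalIntegral.integral_sub hint1 hint2]
      refine intervalIntegral.integral_congr fun s _ => ?_
      ring
    have hdist : dist (Φ a t) (Φ a' t)
        = |R⁻¹ * ∫ s in (0 : ℝ)..T, ((γ - 1) * Mk (↑t) s) *
            (a (Set.projIcc 0 T hT' s) - a' (Set.projIcc 0 T hT' s))| := by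
      have hval : ∀ a'' : X, Φ a'' t = x₀ * Real.exp (B ↑t) + R⁻¹ *
          ∫ s in (0 : ℝ)..T, Mk (↑t) s * ((γ - 1) * a'' (Set.projIcc 0 T hT' s) + η) :=
        fun a'' => rfl
      rw [Real.dist_eq, hval a, hval a']
      congr 1
      rw [← hdiff]
      ring
    rw [hdist, abs_mul, abs_inv, abs_of_pos hR]
    -- bound the integral
    have hbound : |∫ s in (0 : ℝ)..T, ((γ - 1) * Mk (↑t) s) *
          (a (Set.projIcc 0 T hT' s) - a' (Set.projIcc 0 T hT' s))|
        ≤ (T / (2 * R) * κ + R / (2 * T) * T) * D := by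
      have h1 : |∫ s in (0 : ℝ)..T, ((γ - 1) * Mk (↑t) s) *
            (a (Set.projIcc 0 T hT' s) - a' (Set.projIcc 0 T hT' s))|
          ≤ ∫ s in (0 : ℝ)..T, |((γ - 1) * Mk (↑t) s) *
            (a (Set.projIcc 0 T hT' s) - a' (Set.projIcc 0 T hT' s))| := by
        have := intervalIntegral.norm_integral_le_integral_norm
          (f := fun s => ((γ - 1) * Mk (↑t) s) *
            (a (Set.projIcc 0 T hT' s) - a' (Set.projIcc 0 T hT' s))) (μ := volume) hT'
        simpa only [Real.norm_eq_abs] using this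
      have h2 : (∫ s in (0 : ℝ)..T, |((γ - 1) * Mk (↑t) s) *
            (a (Set.projIcc 0 T hT' s) - a' (Set.projIcc 0 T hT' s))|)
          ≤ ∫ s in (0 : ℝ)..T,
            (((γ - 1) * Mk (↑t) s) ^ 2 * (T / (2 * R)) + R / (2 * T)) * D := by
        refine intervalIntegral.integral_mono_on hT' ?_ ?_ fun s _ => ?_
        · exact (((continuous_const.mul hKscont).mul (hacont.sub ha'cont)).abs).intervalIntegrable 0 T
        · exact ((((continuous_const.mul hKscont).pow 2).mul continuous_const).add
            continuous_const).mul continuous_const |>.intervalIntegrable 0 T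
        · rw [abs_mul]
          calc |(γ - 1) * Mk (↑t) s| * |a (Set.projIcc 0 T hT' s) - a' (Set.projIcc 0 T hT' s)|
              ≤ |(γ - 1) * Mk (↑t) s| * D :=
                mul_le_mul_of_nonneg_left (hΔ s) (abs_nonneg _)
            _ ≤ (((γ - 1) * Mk (↑t) s) ^ 2 * (T / (2 * R)) + R / (2 * T)) * D :=
                mul_le_mul_of_nonneg_right (stmt15_aux_amgm T R _ hT hR) hD0
      have h3 : (∫ s in (0 : ℝ)..T,
            (((γ - 1) * Mk (↑t) s) ^ 2 * (T / (2 * R)) + R / (2 * T)) * D)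
          ≤ (T / (2 * R) * κ + R / (2 * T) * T) * D := by
        have hq : IntervalIntegrable (fun s => ((γ - 1) * Mk (↑t) s) ^ 2) volume 0 T :=
          ((continuous_const.mul hKscont).pow 2).intervalIntegrable 0 T
        have heq2 : (∫ s in (0 : ℝ)..T,
              (((γ - 1) * Mk (↑t) s) ^ 2 * (T / (2 * R)) + R / (2 * T)) * D)
            = (T / (2 * R) * D) * (∫ s in (0 : ℝ)..T, ((γ - 1) * Mk (↑t) s) ^ 2)
              + (T - 0) * (R / (2 * T) * D) := by
          calc (∫ s in (0 : ℝ)..T,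
                (((γ - 1) * Mk (↑t) s) ^ 2 * (T / (2 * R)) + R / (2 * T)) * D)
              = ∫ s in (0 : ℝ)..T,
                  ((T / (2 * R) * D) * ((γ - 1) * Mk (↑t) s) ^ 2 + R / (2 * T) * D) :=
                intervalIntegral.integral_congr fun s _ => by ring
            _ = (T / (2 * R) * D) * (∫ s in (0 : ℝ)..T, ((γ - 1) * Mk (↑t) s) ^ 2)
                  + ∫ _s in (0 : ℝ)..T, (R / (2 * T) * D : ℝ) := by
                rw [intervalIntegral.integral_add (hq.const_mul _) intervalIntegrable_const,
                  intervalIntegral.integral_const_mul]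
            _ = (T / (2 * R) * D) * (∫ s in (0 : ℝ)..T, ((γ - 1) * Mk (↑t) s) ^ 2)
                  + (T - 0) * (R / (2 * T) * D) := by
                rw [intervalIntegral.integral_const, smul_eq_mul]
        rw [heq2]
        have hκt := hκ (↑t) ht
        have : (T / (2 * R) * D) * (∫ s in (0 : ℝ)..T, ((γ - 1) * Mk (↑t) s) ^ 2)
            ≤ (T / (2 * R) * D) * κ :=
          mul_le_mul_of_nonneg_left hκt (by positivity)
        nlinarith [this]
      linarith
    calc R⁻¹ * |∫ s in (0 : ℝ)..T, ((γ - 1) * Mk (↑t) s) *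
          (a (Set.projIcc 0 T hT' s) - a' (Set.projIcc 0 T hT' s))|
        ≤ R⁻¹ * ((T / (2 * R) * κ + R / (2 * T) * T) * D) :=
          mul_le_mul_of_nonneg_left hbound (by positivity)
      _ = L * D := by
          rw [hLdef]
          field_simp
  -- contraction and fixed point
  have hC : ContractingWith ⟨L, hL0⟩ Φ := by
    constructor
    · exact_mod_cast hL1
    · exact LipschitzWith.of_dist_le_mul fun a a' => hLip a a'
  set a₀ : X := hC.fixedPoint Φ with ha₀def
  have hfix : Φ a₀ = a₀ := hC.fixedPoint_isFixedPt
  refine ⟨fun t => a₀ (Set.projIcc 0 T hT' t),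
    (a₀.continuous.comp continuous_projIcc).continuousOn, ?_⟩
  intro t ht
  have hproj : Set.projIcc 0 T hT' t = ⟨t, ht⟩ := Set.projIcc_of_mem hT' ht
  have h := congrArg (fun f : X => f ⟨t, ht⟩) hfix
  simp only [hΦdef, ContinuousMap.coe_mk] at h
  show a₀ (Set.projIcc 0 T hT' t) = _
  rw [hproj]
  exact h.symm
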